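/- arXiv:1503.01744 — 3 statements merged into one kernel-verified Lean document; each statement's English description precedes it below -/
import Mathlib

section
/- For every real number x ≥ 365323, the inequality x / (log x − 1.1) < (log x) / (log(x + 150) − log x) holds. -/
open Real

lemma log_x0_lb : (12.8085371 : ℝ) ≤ Real.log 365323 := by
  have hu : |(-(103179/262144) : ℝ)| < 1 := by
    rw [abs_neg, abs_of_pos] <;> norm_num
  have h := Real.abs_log_sub_add_sum_range_le hu 18
  have h2 : (1 : ℝ) - -(103179/262144) = 365323 / 2 ^ 18 := by norm_num
  rw [h2, Real.log_div (by norm_num) (by positivity), Real.log_pow,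
    abs_neg, abs_of_pos (by norm_num : (0:ℝ) < 103179/262144), abs_le] at h
  have h1 := h.1
  have hl2 := Real.log_two_gt_d9
  simp only [Finset.sum_range_succ, Finset.sum_range_zero] at h1
  norm_num at h1 ⊢
  linarith

lemma log_cubic_ub {t : ℝ} (ht : 0 < t) (ht1 : t ≤ 1/1000) :
    Real.log (1 + t) ≤ t - t^2/2 + t^3/3 := by
  have hy : 0 ≤ t - t^2/2 + t^3/3 := by nlinarith
  have hs := Real.sum_le_exp_of_nonneg hy 4
  simp only [Finset.sum_range_succ, Finset.sum_range_zero] at hs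
  norm_num [Nat.factorial] at hs
  rw [Real.log_le_iff_le_exp (by linarith)]
  refine le_trans ?_ hs
  nlinarith [sq_nonneg t, pow_pos ht 3, pow_pos ht 4, sq_nonneg (t^2), sq_nonneg (t^3)]

theorem safe_bound_gap_150 (x : ℝ) (hx : 365323 ≤ x) :
    x / (Real.log x - 1.1) <
      Real.log x / (Real.log (x + 150) - Real.log x) := by
  have hx0 : (0:ℝ) < x := by linarith
  -- lower bound on log x
  have hv0 : (0:ℝ) < 365323 / x := by positivity
  have hv1 : 365323 / x ≤ 1 := by rw [div_le_one hx0]; exact hx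
  have hLlow : 12.8085371 + 1 - 365323 / x ≤ Real.log x := by
    have h1 : 1 - (x / 365323)⁻¹ ≤ Real.log (x / 365323) :=
      Real.one_sub_inv_le_log_of_pos (by positivity)
    rw [Real.log_div (by linarith) (by norm_num)] at h1
    have h2 : (x / 365323)⁻¹ = 365323 / x := by field_simp
    rw [h2] at h1
    have := log_x0_lb
    linarith
  have hL11 : (1.1:ℝ) < Real.log x := by linarith
  -- positivity of the log gap
  have hd : 0 < Real.log (x + 150) - Real.log x :=
    sub_pos.2 (Real.log_lt_log hx0 (by linarith))
  rw [div_lt_div_iff₀ (by linarith) hd]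
  -- upper bound on the gap
  have ht0 : (0:ℝ) < 150 / x := by positivity
  have ht1 : 150 / x ≤ 1/1000 := by
    rw [div_le_div_iff₀ hx0 (by norm_num)]; linarith
  have hgap : Real.log (x + 150) - Real.log x ≤
      150/x - (150/x)^2/2 + (150/x)^3/3 := by
    have hx150 : x + 150 = x * (1 + 150/x) := by field_simp
    rw [hx150, Real.log_mul (ne_of_gt hx0) (by positivity)]
    have := log_cubic_ub ht0 ht1
    linarith
  have hxgap : x * (Real.log (x + 150) - Real.log x) ≤
      150 - 11250 / x + 1125000 / x^2 := by
    have h := mul_le_mul_of_nonneg_left hgap hx0.le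
    have heq : x * (150/x - (150/x)^2/2 + (150/x)^3/3)
        = 150 - 11250 / x + 1125000 / x^2 := by
      field_simp; ring
    linarith [heq ▸ h]
  -- final quadratic inequality in v := 365323/x
  set v : ℝ := 365323 / x with hv
  have h1x : 11250 / x = (11250/365323) * v := by rw [hv]; field_simp
  have h2x : 1125000 / x^2 = (1125000/365323^2) * v^2 := by
    rw [hv]; field_simp
  have hM : (1.1:ℝ) < 12.8085371 + 1 - v := by linarith
  have key : 150 - (11250/365323) * v + (1125000/365323^2) * v^2 <
      (12.8085371 + 1 - v) * ((12.8085371 + 1 - v) - 1.1) := by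
    nlinarith [sq_nonneg (1 - v), mul_nonneg (sub_nonneg.2 hv1) hv0.le]
  have mono : (12.8085371 + 1 - v) * ((12.8085371 + 1 - v) - 1.1) ≤
      Real.log x * (Real.log x - 1.1) := by
    nlinarith [hLlow, hM]
  calc x * (Real.log (x + 150) - Real.log x)
      ≤ 150 - 11250 / x + 1125000 / x^2 := hxgap
    _ = 150 - (11250/365323) * v + (1125000/365323^2) * v^2 := by rw [h1x, h2x]
    _ < (12.8085371 + 1 - v) * ((12.8085371 + 1 - v) - 1.1) := key
    _ ≤ Real.log x * (Real.log x - 1.1) := mono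
end

section
/- For every real number x ≥ 8, the inequality x / (log x − 1.2) < (log x) / (log(x + 2) − log x) holds. -/
set_option maxHeartbeats 1000000

theorem safe_bound_gap_2 (x : ℝ) (hx : 8 ≤ x) :
    x / (Real.log x - 1.2) <
      Real.log x / (Real.log (x + 2) - Real.log x) := by
  have hx0 : (0:ℝ) < x := by linarith
  have hx2 : (0:ℝ) < x - 2 := by linarith
  set L := Real.log x with hLdef
  have hlog2 : (0.6931471803:ℝ) < Real.log 2 := Real.log_two_gt_d9
  have h8 : Real.log 8 = 3 * Real.log 2 := by
    rw [show (8:ℝ) = 2^3 by norm_num, Real.log_pow]; push_cast; ring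
  have hL8 : Real.log 8 ≤ L := Real.log_le_log (by norm_num) hx
  have hLlb : (2.0794415409:ℝ) < L := by rw [h8] at hL8; linarith
  have hL12 : (0:ℝ) < L - 1.2 := by norm_num; linarith
  set D := Real.log (x + 2) - L with hDdef
  have hDpos : 0 < D := by
    have := Real.log_lt_log hx0 (by linarith : x < x + 2)
    simp only [hDdef]; linarith
  set t : ℝ := 2 / x with htdef
  have ht0 : 0 < t := by positivity
  have ht1 : t ≤ 1/4 := by
    rw [htdef, div_le_div_iff₀ hx0 (by norm_num)]; linarith
  have h1t : 1 - t = (x - 2) / x := by rw [htdef]; field_simp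
  have habs := Real.abs_log_sub_add_sum_range_le (x := -t)
    (by rw [abs_neg, abs_of_pos ht0]; linarith) 4
  have hlog1t : Real.log (1 - -t) = D := by
    have h1 : 1 - -t = (x + 2) / x := by rw [htdef]; field_simp; ring
    rw [h1, Real.log_div (by linarith) (ne_of_gt hx0), hDdef, hLdef]
  rw [hlog1t, abs_neg, abs_of_pos ht0] at habs
  have hsum : (∑ i ∈ Finset.range 4, (-t) ^ (i + 1) / (i + 1))
      = -t + t^2/2 - t^3/3 + t^4/4 := by
    simp [Finset.sum_range_succ]; ring
  rw [hsum] at habs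
  have hDle : D ≤ t - t^2/2 + t^3/3 - t^4/4 + t^5/(1-t) :=
    by have := abs_le.1 habs; linarith [this.2]
  -- main inequality: x * D < L * (L - 1.2)
  have hQ : x * (t - t^2/2 + t^3/3 - t^4/4 + t^5/(1-t))
      = 2 - 2/x + 8/(3*x^2) - 4/x^3 + 32/(x^3*(x-2)) := by
    rw [h1t, htdef]; field_simp; ring
  have hkey : x * D < L * (L - 1.2) := by
    have hxD : x * D ≤ 2 - 2/x + 8/(3*x^2) - 4/x^3 + 32/(x^3*(x-2)) := by
      rw [← hQ]; exact mul_le_mul_of_nonneg_left hDle (le_of_lt hx0)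
    rcases le_or_gt x 9 with h9 | h9
    · have h3 : (0:ℝ) < 3*x^3*(x-2) := by positivity
      have e : 2 - 2/x + 8/(3*x^2) - 4/x^3 + 32/(x^3*(x-2))
          = (6*x^4 - 18*x^3 + 20*x^2 - 28*x + 120)/(3*x^3*(x-2)) := by
        field_simp; ring
      have hb : 2 - 2/x + 8/(3*x^2) - 4/x^3 + 32/(x^3*(x-2)) < 1.82 := by
        rw [e, div_lt_iff₀ h3]
        nlinarith [mul_nonneg (sub_nonneg.2 hx) (sub_nonneg.2 h9), sq_nonneg (x - 8), sq_nonneg (x - 9)]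
      have h2 : (0.8794415409:ℝ) < L - 1.2 := by linarith
      have hb2 : (1.82:ℝ) < L * (L - 1.2) :=
        lt_trans (by norm_num) (mul_lt_mul'' hLlb h2 (by norm_num) (by norm_num))
      linarith
    · have h3 : (0:ℝ) < 3*x^3*(x-2) := by positivity
      have e : 2 - 2/x + 8/(3*x^2) - 4/x^3 + 32/(x^3*(x-2))
          = (6*x^4 - 18*x^3 + 20*x^2 - 28*x + 120)/(3*x^3*(x-2)) := by
        field_simp; ring
      have hb : 2 - 2/x + 8/(3*x^2) - 4/x^3 + 32/(x^3*(x-2)) < 2 := by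
        rw [e, div_lt_iff₀ h3]
        nlinarith [sq_nonneg x]
      have hlog98 : Real.log (8/9 : ℝ) ≤ 8/9 - 1 := Real.log_le_sub_one_of_pos (by norm_num)
      have h98 : Real.log (8/9:ℝ) = Real.log 8 - Real.log 9 := Real.log_div (by norm_num) (by norm_num)
      have hL9 : Real.log 9 ≤ L := Real.log_le_log (by norm_num) (by linarith)
      have hLlb2 : (2.19:ℝ) < L := by rw [h98] at hlog98; rw [h8] at hlog98; linarith
      have h2 : (0.99:ℝ) < L - 1.2 := by linarith
      have hb2 : (2:ℝ) < L * (L - 1.2) :=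
        lt_trans (by norm_num) (mul_lt_mul'' hLlb2 h2 (by norm_num) (by norm_num))
      linarith
  rw [div_lt_div_iff₀ hL12 hDpos]
  linarith [hkey]
end

section
/- If p_k and p_{k+1} are consecutive primes with p_{k+1} − p_k = 2 (twin primes), then p_{k+1}^k < p_k^{k+1}; that is, a prime gap of size 2 can never violate the Firoozbakht conjecture. -/
open Real in
lemma core_ineq (k p : ℕ) (hk : 3 ≤ k) (hp : 2*k ≤ p + 1) : (p+2)^k < p^(k+1) := by
  have hp5 : 5 ≤ p := by omega
  have hP : (5:ℝ) ≤ (p:ℝ) := by exact_mod_cast hp5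
  have hPpos : (0:ℝ) < p := by linarith
  have hP2pos : (0:ℝ) < (p:ℝ) + 2 := by linarith
  have hkP : 2*(k:ℝ) ≤ (p:ℝ) + 1 := by exact_mod_cast hp
  have hk3 : (3:ℝ) ≤ k := by exact_mod_cast hk
  have hlog1 : Real.log (((p:ℝ)+2)/p) ≤ 2/p := by
    have := Real.log_le_sub_one_of_pos (x := ((p:ℝ)+2)/p) (by positivity)
    have h2 : ((p:ℝ)+2)/p - 1 = 2/p := by field_simp; ring
    linarith [h2 ▸ this]
  have hlogp : (1.38:ℝ) < Real.log p := by
    have h4 : Real.log 4 ≤ Real.log p := Real.log_le_log (by norm_num) (by linarith)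
    have : Real.log 4 = 2 * Real.log 2 := by
      rw [show (4:ℝ) = 2^2 by norm_num, Real.log_pow]; push_cast; ring
    nlinarith [Real.log_two_gt_d9]
  have key : (k:ℝ) * Real.log (((p:ℝ)+2)/p) < Real.log p := by
    have h1 : (k:ℝ) * (2/p) ≤ 6/5 := by
      have e : (k:ℝ) * (2/p) = (k*2)/p := by ring
      rw [e, div_le_div_iff₀ hPpos (by norm_num)]
      nlinarith
    have h2 : (k:ℝ) * Real.log (((p:ℝ)+2)/p) ≤ (k:ℝ) * (2/p) := by
      apply mul_le_mul_of_nonneg_left hlog1 (by positivity)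
    linarith
  have hlogsplit : Real.log ((p:ℝ)+2) = Real.log (((p:ℝ)+2)/p) + Real.log p := by
    rw [Real.log_div (by linarith) (by linarith)]; ring
  have main : Real.log (((p:ℝ)+2)^k) < Real.log ((p:ℝ)^(k+1)) := by
    rw [Real.log_pow, Real.log_pow, hlogsplit]
    push_cast
    nlinarith [Real.log_nonneg (show (1:ℝ) ≤ ((p:ℝ)+2)/p by
      rw [le_div_iff₀ hPpos]; linarith)]
  have := (Real.log_lt_log_iff (by positivity) (by positivity)).mp main
  have : ((p:ℝ)+2)^k < (p:ℝ)^(k+1) := this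
  exact_mod_cast this

lemma nth_prime_five : Nat.nth Nat.Prime 2 = 5 :=
  (by decide : Nat.count Nat.Prime 5 = 2) ▸ Nat.nth_count (by norm_num)

lemma nth_prime_lb (n : ℕ) (hn : 1 ≤ n) : 2*n + 1 ≤ Nat.nth Nat.Prime n := by
  induction n with
  | zero => omega
  | succ m ih =>
    rcases Nat.eq_or_lt_of_le hn with h | h
    · rw [show m = 0 by omega, Nat.nth_prime_one_eq_three]
    · have hm : 1 ≤ m := by omega
      have hlb := ih hm
      have hlt : Nat.nth Nat.Prime m < Nat.nth Nat.Prime (m+1) :=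
        (Nat.nth_lt_nth Nat.infinite_setOf_prime).mpr (Nat.lt_succ_self m)
      have hodd1 : Odd (Nat.nth Nat.Prime m) :=
        (Nat.prime_nth_prime m).odd_of_ne_two (by omega)
      have hodd2 : Odd (Nat.nth Nat.Prime (m+1)) :=
        (Nat.prime_nth_prime (m+1)).odd_of_ne_two (by omega)
      obtain ⟨a, ha⟩ := hodd1
      obtain ⟨b, hb⟩ := hodd2
      omega

/-- `nthPrime k` is the `k`-th prime with 1-based indexing: `nthPrime 1 = 2`,
`nthPrime 2 = 3`, `nthPrime 3 = 5`, ... -/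
noncomputable def nthPrime (k : ℕ) : ℕ := Nat.nth Nat.Prime (k - 1)

theorem firoozbakht_twin_primes (k : ℕ) (hk : 1 ≤ k)
    (hgap : nthPrime (k + 1) - nthPrime k = 2) :
    nthPrime (k + 1) ^ k < nthPrime k ^ (k + 1) := by
  have hlt : nthPrime k < nthPrime (k + 1) := by
    unfold nthPrime
    exact (Nat.nth_lt_nth Nat.infinite_setOf_prime).mpr (by omega)
  have hq : nthPrime (k + 1) = nthPrime k + 2 := by omega
  match k, hk with
  | 1, _ =>
    have h1 : nthPrime 1 = 2 := Nat.nth_prime_zero_eq_two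
    have h2 : nthPrime 2 = 3 := Nat.nth_prime_one_eq_three
    rw [show (1:ℕ)+1 = 2 from rfl] at hgap
    omega
  | 2, _ =>
    have h2 : nthPrime 2 = 3 := Nat.nth_prime_one_eq_three
    have h3 : nthPrime 3 = 5 := nth_prime_five
    rw [show (2:ℕ)+1 = 3 from rfl, h2, h3]; norm_num
  | (m+3), _ =>
    rw [hq]
    have hlb : 2*(m+2) + 1 ≤ nthPrime (m+3) := nth_prime_lb (m+2) (by omega)
    exact core_ineq (m+3) (nthPrime (m+3)) (by omega) (by omega)
end
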